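/- arXiv:math/9412219 — 4 statements merged into one kernel-verified Lean document; each statement's English description precedes it below -/
import Mathlib

section
/- Let X be a real Banach space, F a norming subspace of X*, and σ the σ(X,F) topology. If K ⊆ X is a σ-closed, norm-bounded, convex set that is not admissible, then there exists λ > 0 such that the σ-closure of K + λB(X) (where B(X) is the closed unit ball of X) is not admissible and has nonempty norm interior. -/
open Metric Set Pointwise

/-- A set is admissible if it is the intersection of all closed balls containing it. -/
def Admissible {X : Type*} [NormedAddCommGroup X] (K : Set X) : Prop :=
  K = ⋂ p ∈ {p : X × ℝ | K ⊆ closedBall p.1 p.2}, closedBall p.1 p.2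

/-- The `σ(X,F)` topology on `X`: the topology induced by the functionals in `F`. -/
def sigmaTop {X : Type*} [NormedAddCommGroup X] [NormedSpace ℝ X]
    (F : Submodule ℝ (X →L[ℝ] ℝ)) : TopologicalSpace X :=
  TopologicalSpace.induced (fun x => fun f : F => (f : X →L[ℝ] ℝ) x) inferInstance

/-- `F` is a norming subspace of `X*`: `‖x‖ = sup {|f x| : f ∈ F, ‖f‖ ≤ 1}`. -/
def IsNorming {X : Type*} [NormedAddCommGroup X] [NormedSpace ℝ X]
    (F : Submodule ℝ (X →L[ℝ] ℝ)) : Prop :=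
  ∀ x : X, ‖x‖ = sSup {r : ℝ | ∃ f ∈ F, ‖f‖ ≤ 1 ∧ r = |f x|}

/-!
Pick `x₀` lying in every closed ball that contains `K` but not in `K`. Since `K` is convex and
`σ(X,F)`-closed, Hahn–Banach in the locally convex space `(X, σ(X,F))` separates `x₀` from `K` by a
functional `f ∈ F`, say `f < u` on `K` and `u < f x₀`. The `σ`-closure of `K + λB(X)` lies in the
`σ`-closed half-space `f ≤ u + λ‖f‖`, which misses `x₀` once `λ‖f‖ < f x₀ - u`; yet every ball
containing that closure contains `K`, hence `x₀`. The closure has nonempty norm interior because it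
contains the open ball of radius `λ` around any point of `K`.
-/

open Topology

section Admissible

variable {X : Type*} [NormedAddCommGroup X]

theorem admissible_iff {K : Set X} :
    Admissible K ↔ ∀ x, (∀ c r, K ⊆ closedBall c r → x ∈ closedBall c r) → x ∈ K := by
  simp only [Admissible, Subset.antisymm_iff, subset_def, mem_iInter, Prod.forall, mem_ofPred_eq]
  exact ⟨fun h => h.2, fun h => ⟨fun x hx c r hr => hr x hx, h⟩⟩

theorem admissible_empty : Admissible (∅ : Set X) :=
  admissible_iff.2 fun x hx => by simpa using hx x (-1) (empty_subset _)

theorem exists_notMem_of_not_admissible {K : Set X} (h : ¬ Admissible K) :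
    ∃ x ∉ K, ∀ c r, K ⊆ closedBall c r → x ∈ closedBall c r := by
  simpa [admissible_iff, and_comm] using h

theorem not_admissible_of_subset {K C : Set X} {x : X}
    (hx : ∀ c r, K ⊆ closedBall c r → x ∈ closedBall c r) (hKC : K ⊆ C) (hxC : x ∉ C) :
    ¬ Admissible C :=
  fun h => hxC <| admissible_iff.1 h x fun c r hC => hx c r (hKC.trans hC)

end Admissible

theorem WeakBilin.geometric_hahn_banach_closed_point {E F : Type*} [AddCommGroup E] [Module ℝ E]
    [AddCommGroup F] [Module ℝ F] (B : E →ₗ[ℝ] F →ₗ[ℝ] ℝ) {s : Set (WeakBilin B)}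
    (hs : Convex ℝ s) (hsc : IsClosed s) {x : WeakBilin B} (hx : x ∉ s) :
    ∃ y : F, ∃ u, (∀ a ∈ s, B a y < u) ∧ u < B x y := by
  obtain ⟨φ, u, hφs, hφx⟩ := _root_.geometric_hahn_banach_closed_point hs hsc hx
  obtain ⟨y, rfl⟩ := LinearMap.dualEmbedding_surjective B φ
  exact ⟨y, u, hφs, hφx⟩

section SigmaTop

variable {X : Type*} [NormedAddCommGroup X] [NormedSpace ℝ X] (F : Submodule ℝ (X →L[ℝ] ℝ))

/-- `WeakBilin (sigmaPairing F)` is `X` carrying, definitionally, the topology `sigmaTop F`. -/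
def sigmaPairing : X →ₗ[ℝ] F →ₗ[ℝ] ℝ :=
  ((topDualPairing ℝ X).domRestrict F).flip

theorem continuous_sigmaTop_of_mem {f : X →L[ℝ] ℝ} (hf : f ∈ F) : Continuous[sigmaTop F, _] f :=
  @Continuous.comp X (F → ℝ) ℝ (sigmaTop F) _ _ _ _ (continuous_apply (⟨f, hf⟩ : F))
    continuous_induced_dom

theorem geometric_hahn_banach_sigmaTop_closed_point {K : Set X} (hKc : IsClosed[sigmaTop F] K)
    (hK : Convex ℝ K) {x : X} (hx : x ∉ K) : ∃ f ∈ F, ∃ u, (∀ k ∈ K, f k < u) ∧ u < f x := by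
  obtain ⟨⟨f, hf⟩, u, hfK, hfx⟩ :=
    WeakBilin.geometric_hahn_banach_closed_point (F := F) (sigmaPairing F) hK (by exact hKc) hx
  exact ⟨f, hf, u, hfK, hfx⟩

theorem closure_sigmaTop_add_closedBall_subset {K : Set X} {f : X →L[ℝ] ℝ} (hf : f ∈ F) {u : ℝ}
    (hK : ∀ k ∈ K, f k ≤ u) (l : ℝ) :
    closure[sigmaTop F] (K + closedBall 0 l) ⊆ {z | f z ≤ u + ‖f‖ * l} := by
  refine @closure_minimal X (sigmaTop F) _ _ ?_
    (@IsClosed.preimage X ℝ (sigmaTop F) _ _ (continuous_sigmaTop_of_mem F hf) _ isClosed_Iic)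
  rintro _ ⟨k, hk, b, hb, rfl⟩
  have hfb : f b ≤ ‖f‖ * l := calc
    f b ≤ ‖f‖ * ‖b‖ := (le_abs_self _).trans (f.le_opNorm b)
    _ ≤ ‖f‖ * l := by gcongr; exact mem_closedBall_zero_iff.1 hb
  simpa using add_le_add (hK k hk) hfb

end SigmaTop

theorem ball_subset_add_closedBall {X : Type*} [NormedAddCommGroup X] {K : Set X} {k : X}
    (hk : k ∈ K) (l : ℝ) : ball k l ⊆ K + closedBall 0 l := by
  calc ball k l ⊆ closedBall k l := ball_subset_closedBall
    _ = {k} + closedBall 0 l := by rw [singleton_add_closedBall, add_zero]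
    _ ⊆ K + closedBall 0 l := add_subset_add_right (singleton_subset_iff.2 hk)

theorem stmt_1_general {X : Type*} [NormedAddCommGroup X] [NormedSpace ℝ X]
    (F : Submodule ℝ (X →L[ℝ] ℝ))
    (K : Set X) (hKc : @IsClosed X (sigmaTop F) K)
    (hKconv : Convex ℝ K)
    (hKnadm : ¬ Admissible K) :
    ∃ l : ℝ, 0 < l ∧
      ¬ Admissible (@closure X (sigmaTop F) (K + closedBall (0 : X) l)) ∧
      (interior (@closure X (sigmaTop F) (K + closedBall (0 : X) l))).Nonempty := by
  obtain ⟨x₀, hx₀K, hx₀⟩ := exists_notMem_of_not_admissible hKnadm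
  obtain ⟨k₀, hk₀⟩ : K.Nonempty := nonempty_iff_ne_empty.2 fun h => hKnadm (h ▸ admissible_empty)
  obtain ⟨f, hf, u, hfK, hfx₀⟩ := geometric_hahn_banach_sigmaTop_closed_point F hKc hKconv hx₀K
  set l := (f x₀ - u) / (‖f‖ + 1)
  have hl : 0 < l := div_pos (by linarith) (by positivity)
  have hfl : ‖f‖ * l < f x₀ - u := calc
    ‖f‖ * l < (‖f‖ + 1) * l := by linarith
    _ = f x₀ - u := mul_div_cancel₀ _ (by positivity)
  have hsub : K + closedBall 0 l ⊆ closure[sigmaTop F] (K + closedBall 0 l) :=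
    @subset_closure X (sigmaTop F) _
  refine ⟨l, hl, not_admissible_of_subset hx₀ ?_ fun hx₀C => ?_, ?_⟩
  · exact (subset_add_left K (mem_closedBall_self hl.le)).trans hsub
  · have hfx₀le : f x₀ ≤ u + ‖f‖ * l :=
      closure_sigmaTop_add_closedBall_subset F hf (fun k hk => (hfK k hk).le) l hx₀C
    linarith
  · exact ⟨k₀, interior_maximal ((ball_subset_add_closedBall hk₀ l).trans hsub) isOpen_ball
      (mem_ball_self hl)⟩

/-- Remark r1: a σ-closed bounded convex inadmissible set gives rise to an inadmissible
set of the form `K_λ` with nonempty norm interior. -/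
theorem stmt_1 {X : Type*} [NormedAddCommGroup X] [NormedSpace ℝ X] [CompleteSpace X]
    (F : Submodule ℝ (X →L[ℝ] ℝ)) (hF : IsNorming F)
    (K : Set X) (hKc : @IsClosed X (sigmaTop F) K)
    (hKb : Bornology.IsBounded K) (hKconv : Convex ℝ K)
    (hKnadm : ¬ Admissible K) :
    ∃ l : ℝ, 0 < l ∧
      ¬ Admissible (@closure X (sigmaTop F) (K + closedBall (0 : X) l)) ∧
      (interior (@closure X (sigmaTop F) (K + closedBall (0 : X) l))).Nonempty :=
  stmt_1_general F K hKc hKconv hKnadm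
end

section
/- Let X be a real Banach space, F a norming subspace of X*, and σ the σ(X,F) topology. If a nonempty σ-closed, norm-bounded, convex set K ⊆ X is equal to the σ-closed convex hull of its set of farthest points b(K), then K has Property (R), i.e., every crescent of K contains a farthest point of K. -/
open Metric Set Pointwise

/-- The farthest distance map `r_K(x) = sup {‖z - x‖ : z ∈ K}`. -/
noncomputable def rFar {X : Type*} [NormedAddCommGroup X] (K : Set X) (x : X) : ℝ :=
  sSup ((fun z => ‖z - x‖) '' K)

/-- `Q_K(x)`: the set of points of `K` farthest from `x`. -/
def QFar {X : Type*} [NormedAddCommGroup X] (K : Set X) (x : X) : Set X :=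
  {z ∈ K | ‖z - x‖ = rFar K x}

/-- `D(K)`: the set of points admitting a farthest point in `K`. -/
def DFar {X : Type*} [NormedAddCommGroup X] (K : Set X) : Set X :=
  {x | (QFar K x).Nonempty}

/-- `b(K)`: the set of farthest points of `K`. -/
def farPoints {X : Type*} [NormedAddCommGroup X] (K : Set X) : Set X :=
  ⋃ x ∈ DFar K, QFar K x

/-- The crescent `C(K, x, α) = {z ∈ K : ‖z - x‖ > r_K(x) - α}`. -/
def crescent {X : Type*} [NormedAddCommGroup X] (K : Set X) (x : X) (α : ℝ) : Set X :=
  {z ∈ K | rFar K x - α < ‖z - x‖}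

/-- Property (R): every crescent of `K` contains a farthest point of `K`. -/
def PropR {X : Type*} [NormedAddCommGroup X] (K : Set X) : Prop :=
  ∀ (x : X) (α : ℝ), 0 < α → ∃ z ∈ crescent K x α, z ∈ farPoints K

/-
A crescent `C(K, x, α)` is never empty, since `r_K(x)` is a supremum. If it missed `b(K)`, then
`b(K)` would lie in the closed ball `B(x, r_K(x) - α)`. That ball is convex, and it is σ-closed
because `F` is norming: it is the intersection of the σ-closed slabs `|f (z - x)| ≤ r_K(x) - α`
over `f ∈ F` with `‖f‖ ≤ 1`. Hence the ball contains the σ-closed convex hull of `b(K)`, which is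
`K`, contradicting the existence of a point of the crescent.
-/

section Sigma

variable {X : Type*} [NormedAddCommGroup X] [NormedSpace ℝ X] {F : Submodule ℝ (X →L[ℝ] ℝ)}

lemma continuous_sigmaTop_apply {f : X →L[ℝ] ℝ} (hf : f ∈ F) :
    @Continuous X ℝ (sigmaTop F) _ fun z => f z :=
  @Continuous.comp X (F → ℝ) ℝ (sigmaTop F) _ _ _ _ (continuous_apply (⟨f, hf⟩ : F))
    continuous_induced_dom

lemma IsNorming.norm_le_iff (hF : IsNorming F) (y : X) (c : ℝ) :
    ‖y‖ ≤ c ↔ ∀ f ∈ F, ‖f‖ ≤ 1 → |f y| ≤ c := by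
  refine ⟨fun h f _ hf1 => ?_, fun h => ?_⟩
  · calc |f y| = ‖f y‖ := (Real.norm_eq_abs _).symm
      _ ≤ ‖f‖ * ‖y‖ := f.le_opNorm y
      _ ≤ ‖y‖ := mul_le_of_le_one_left (norm_nonneg y) hf1
      _ ≤ c := h
  · have hc : 0 ≤ c := by simpa using h 0 F.zero_mem (by simp)
    rw [hF y]
    refine Real.sSup_le ?_ hc
    rintro r ⟨f, hf, hf1, rfl⟩
    exact h f hf hf1

lemma IsNorming.closedBall_eq_biInter (hF : IsNorming F) (x : X) (ρ : ℝ) :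
    closedBall x ρ = ⋂ f ∈ {f : X →L[ℝ] ℝ | f ∈ F ∧ ‖f‖ ≤ 1}, {z : X | |f z - f x| ≤ ρ} := by
  ext z
  simp only [mem_closedBall, dist_eq_norm, hF.norm_le_iff, map_sub, mem_iInter, mem_ofPred,
    and_imp]

lemma IsNorming.isClosed_closedBall (hF : IsNorming F) (x : X) (ρ : ℝ) :
    @IsClosed X (sigmaTop F) (closedBall x ρ) := by
  rw [hF.closedBall_eq_biInter]
  -- only now: installing `sigmaTop F` earlier would change the meaning of `X →L[ℝ] ℝ`
  let := sigmaTop F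
  exact isClosed_biInter fun f ⟨hf, _⟩ =>
    isClosed_le ((continuous_sigmaTop_apply hf).sub continuous_const).abs continuous_const

lemma IsNorming.sigmaClosure_convexHull_subset_closedBall (hF : IsNorming F) {A : Set X} {x : X}
    {ρ : ℝ} (hA : A ⊆ closedBall x ρ) :
    @closure X (sigmaTop F) (convexHull ℝ A) ⊆ closedBall x ρ :=
  @closure_minimal X (sigmaTop F) _ _ (convexHull_min hA (convex_closedBall x ρ))
    (hF.isClosed_closedBall x ρ)

end Sigma

section Farthest

variable {X : Type*} [NormedAddCommGroup X] {K : Set X}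

lemma farPoints_subset : farPoints K ⊆ K := fun _ hw => by
  obtain ⟨_, _, hwQ⟩ := mem_iUnion₂.mp hw
  exact hwQ.1

lemma crescent_nonempty (hne : K.Nonempty) (x : X) {α : ℝ} (hα : 0 < α) :
    (crescent K x α).Nonempty := by
  obtain ⟨_, ⟨z, hzK, rfl⟩, hlt⟩ :=
    exists_lt_of_lt_csSup (hne.image fun z => ‖z - x‖) (sub_lt_self (rFar K x) hα)
  exact ⟨z, hzK, hlt⟩

lemma farPoints_subset_closedBall_of_disjoint {x : X} {α : ℝ}
    (hdisj : Disjoint (crescent K x α) (farPoints K)) :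
    farPoints K ⊆ closedBall x (rFar K x - α) := by
  intro w hw
  rw [mem_closedBall, dist_eq_norm]
  by_contra hlt
  exact hdisj.notMem_of_mem_right hw ⟨farPoints_subset hw, lt_of_not_ge hlt⟩

end Farthest

theorem stmt_4_general {X : Type*} [NormedAddCommGroup X] [NormedSpace ℝ X]
    (F : Submodule ℝ (X →L[ℝ] ℝ)) (hF : IsNorming F)
    (K : Set X) (hne : K.Nonempty)
    (h : K = @closure X (sigmaTop F) (convexHull ℝ (farPoints K))) :
    PropR K := by
  intro x α hα
  by_contra hmiss
  have hdisj : Disjoint (crescent K x α) (farPoints K) :=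
    Set.disjoint_left.mpr fun z hz hzb => hmiss ⟨z, hz, hzb⟩
  have hKball : K ⊆ closedBall x (rFar K x - α) := by
    conv_lhs => rw [h]
    exact hF.sigmaClosure_convexHull_subset_closedBall
      (farPoints_subset_closedBall_of_disjoint hdisj)
  obtain ⟨z, hzK, hz⟩ := crescent_nonempty hne x hα
  have hzball : ‖z - x‖ ≤ rFar K x - α := by simpa [dist_eq_norm] using hKball hzK
  exact hz.not_ge hzball

/-- Theorem far, (a) ⟹ (b)(ii): if a nonempty σ-closed bounded convex set equals the
σ-closed convex hull of its farthest points, then it has Property (R). -/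
theorem stmt_4 {X : Type*} [NormedAddCommGroup X] [NormedSpace ℝ X] [CompleteSpace X]
    (F : Submodule ℝ (X →L[ℝ] ℝ)) (hF : IsNorming F)
    (K : Set X) (hne : K.Nonempty) (hKc : @IsClosed X (sigmaTop F) K)
    (hKb : Bornology.IsBounded K) (hKconv : Convex ℝ K)
    (h : K = @closure X (sigmaTop F) (convexHull ℝ (farPoints K))) :
    PropR K :=
  stmt_4_general F hF K hne h
end

section
/- Let K be a nonempty closed bounded set in a real Banach space X. If K is densely remotal, i.e., the set D(K) = {x ∈ X : Q_K(x) ≠ ∅} is norm dense in X, then K has Property (R): every crescent of K contains a farthest point of K. -/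
open Metric Set Pointwise

lemma bddAbove_rFar {X : Type*} [NormedAddCommGroup X] {K : Set X}
    (hKb : Bornology.IsBounded K) (y : X) :
    BddAbove ((fun z => ‖z - y‖) '' K) := by
  obtain ⟨C, hC⟩ := isBounded_iff_forall_norm_le.mp hKb
  refine ⟨C + ‖y‖, ?_⟩
  rintro r ⟨w, hw, rfl⟩
  calc ‖w - y‖ ≤ ‖w‖ + ‖y‖ := norm_sub_le _ _
    _ ≤ C + ‖y‖ := by linarith [hC w hw]

lemma norm_sub_le_rFar {X : Type*} [NormedAddCommGroup X] {K : Set X}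
    (hKb : Bornology.IsBounded K) {z : X} (hz : z ∈ K) (y : X) :
    ‖z - y‖ ≤ rFar K y :=
  le_csSup (bddAbove_rFar hKb y) ⟨z, hz, rfl⟩

lemma rFar_le_add {X : Type*} [NormedAddCommGroup X] {K : Set X} (hne : K.Nonempty)
    (hKb : Bornology.IsBounded K) (x y : X) :
    rFar K x ≤ rFar K y + ‖y - x‖ := by
  apply Real.sSup_le
  · rintro r ⟨z, hz, rfl⟩
    have h1 : z - x = (z - y) + (y - x) := by abel
    have h2 : ‖z - x‖ ≤ ‖z - y‖ + ‖y - x‖ := h1 ▸ norm_add_le _ _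
    linarith [norm_sub_le_rFar hKb hz y]
  · obtain ⟨z, hz⟩ := hne
    linarith [norm_sub_le_rFar hKb hz y, norm_nonneg (z - y), norm_nonneg (y - x)]

/-- Proposition R: any densely remotal set has Property (R). -/
theorem stmt_6 {X : Type*} [NormedAddCommGroup X] [NormedSpace ℝ X] [CompleteSpace X]
    (K : Set X) (hne : K.Nonempty) (hKc : IsClosed K) (hKb : Bornology.IsBounded K)
    (hdr : Dense (DFar K)) :
    PropR K := by
  intro x α hα
  obtain ⟨y, hy1, hy2⟩ := Metric.dense_iff.mp hdr x (α/2) (by linarith)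
  obtain ⟨z, hzK, hz⟩ := hy2
  refine ⟨z, ⟨hzK, ?_⟩, Set.mem_biUnion (show y ∈ DFar K from ⟨z, hzK, hz⟩) ⟨hzK, hz⟩⟩
  have hxy : ‖y - x‖ < α/2 := by
    have := Metric.mem_ball.mp hy1
    rwa [dist_eq_norm] at this
  have h1 : rFar K x ≤ rFar K y + ‖y - x‖ := rFar_le_add hne hKb x y
  have e : z - y = (z - x) + (x - y) := by abel
  have h2 : ‖z - y‖ ≤ ‖z - x‖ + ‖x - y‖ := e ▸ norm_add_le _ _
  have e2 : ‖x - y‖ = ‖y - x‖ := norm_sub_rev x y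
  rw [hz] at h2
  linarith
end

section
/- Let X be a real Banach space, F a norming subspace of X*, and σ the σ(X,F) topology. If K ⊆ X is a nonempty σ-closed, norm-bounded, convex set, then K = ∩_{λ>0} K_λ, where K_λ denotes the σ-closure of K + λB(X) and B(X) is the closed unit ball of X. -/
open Metric Set Pointwise

/-!
The σ(X,F) topology is a group topology coarser than the norm topology, so every σ-neighbourhood
`U` of `0` contains a ball `λ B(X)`. Taking a symmetric σ-neighbourhood `V` with `V + V ⊆ U` and
`λ B(X) ⊆ V`, every point of the σ-closure of `K + λ B(X)` lies in `K + V + V ⊆ K + U`; hence a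
point of every `K_λ` lies in the σ-closure of `K`, which is `K`.
-/

open Filter Topology

theorem IsClosed.iInter_closure_add_subset {G ι : Type*} [TopologicalSpace G] [AddCommGroup G]
    [IsTopologicalAddGroup G] {K : Set G} (hK : IsClosed K) {p : ι → Prop} {B : ι → Set G}
    (hB : ∀ V ∈ 𝓝 (0 : G), ∃ i, p i ∧ B i ⊆ V) :
    ⋂ i, ⋂ (_ : p i), closure (K + B i) ⊆ K := by
  intro x hx
  refine hK.closure_subset (mem_closure_iff_nhds_zero.2 fun U hU => ?_)
  obtain ⟨V, hV, -, hVneg, hVU⟩ := exists_closed_nhds_zero_neg_eq_add_subset hU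
  obtain ⟨i, hi, hBV⟩ := hB V hV
  obtain ⟨_, ⟨k, hk, b, hb, rfl⟩, hkbx⟩ :=
    mem_closure_iff_nhds_zero.1 (mem_iInter₂.1 hx i hi) V hV
  refine ⟨k, hk, hVU ?_⟩
  have hnegb : -b ∈ V := by rw [← hVneg]; exact neg_mem_neg.2 (hBV hb)
  have hsplit : k - x = (k + b - x) + -b := by abel
  exact hsplit ▸ add_mem_add hkbx hnegb

section SigmaTopology

variable {X : Type*} [NormedAddCommGroup X] [NormedSpace ℝ X] (F : Submodule ℝ (X →L[ℝ] ℝ))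

theorem isTopologicalAddGroup_sigmaTop : @IsTopologicalAddGroup X (sigmaTop F) _ :=
  topologicalAddGroup_induced (LinearMap.pi fun f : F => (f : X →L[ℝ] ℝ).toLinearMap)

theorem le_sigmaTop : (inferInstance : TopologicalSpace X) ≤ sigmaTop F :=
  continuous_iff_le_induced.1 (continuous_pi fun f => (f : X →L[ℝ] ℝ).continuous)

theorem exists_closedBall_subset_of_mem_sigmaTop_nhds {V : Set X}
    (hV : V ∈ @nhds X (sigmaTop F) 0) : ∃ ε > 0, closedBall (0 : X) ε ⊆ V :=
  nhds_basis_closedBall.mem_iff.1 (nhds_mono (le_sigmaTop F) hV)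

end SigmaTopology

theorem stmt_16_general {X : Type*} [NormedAddCommGroup X] [NormedSpace ℝ X]
    (F : Submodule ℝ (X →L[ℝ] ℝ))
    (K : Set X) (hKc : @IsClosed X (sigmaTop F) K) :
    K = ⋂ l ∈ Set.Ioi (0 : ℝ), @closure X (sigmaTop F) (K + closedBall (0 : X) l) := by
  refine Subset.antisymm (subset_iInter₂ fun l hl => ?_) ?_
  · exact (subset_add_left K (mem_closedBall_self hl.le)).trans (@subset_closure X (sigmaTop F) _)
  · exact @IsClosed.iInter_closure_add_subset X ℝ (sigmaTop F) _ (isTopologicalAddGroup_sigmaTop F)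
      K hKc _ _ fun _ hV => exists_closedBall_subset_of_mem_sigmaTop_nhds F hV

/-- A nonempty σ-closed bounded convex set `K` satisfies `K = ⋂_{λ>0} K_λ`, where `K_λ` is
the σ-closure of `K + λ B(X)`. -/
theorem stmt_16 {X : Type*} [NormedAddCommGroup X] [NormedSpace ℝ X] [CompleteSpace X]
    (F : Submodule ℝ (X →L[ℝ] ℝ)) (hF : IsNorming F)
    (K : Set X) (hne : K.Nonempty) (hKc : @IsClosed X (sigmaTop F) K)
    (hKb : Bornology.IsBounded K) (hKconv : Convex ℝ K) :
    K = ⋂ l ∈ Set.Ioi (0 : ℝ), @closure X (sigmaTop F) (K + closedBall (0 : X) l) :=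
  stmt_16_general F K hKc
end
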